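/- Assume d = 1/4 and e = 0 (with a, b ∈ ℝ arbitrary). Let u be a solution of the Longstaff–Schwartz equation on Ω, and let ε ∈ ℝ. Then the function w(x,y,t) = exp( ε·(4√y − tε)/2 ) · u( x, (2√y − tε)²/4, t ) satisfies the Longstaff–Schwartz equation at every point (x,y,t) ∈ Ω with 2√y > tε. -/

import Mathlib

/-- Partial derivative in `x`. -/
noncomputable def pdX (u : ℝ → ℝ → ℝ → ℝ) (x y t : ℝ) : ℝ := deriv (fun z => u z y t) x

/-- Partial derivative in `y`. -/
noncomputable def pdY (u : ℝ → ℝ → ℝ → ℝ) (x y t : ℝ) : ℝ := deriv (fun z => u x z t) y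

/-- Partial derivative in `t`. -/
noncomputable def pdT (u : ℝ → ℝ → ℝ → ℝ) (x y t : ℝ) : ℝ := deriv (fun z => u x y z) t

/-- Second partial derivative in `x`. -/
noncomputable def pdXX (u : ℝ → ℝ → ℝ → ℝ) (x y t : ℝ) : ℝ := deriv (fun z => pdX u z y t) x

/-- Second partial derivative in `y`. -/
noncomputable def pdYY (u : ℝ → ℝ → ℝ → ℝ) (x y t : ℝ) : ℝ := deriv (fun z => pdY u x z t) y

/-- The domain `Ω = {(x,y,t) : x > 0, y > 0}`. -/
def Omega : Set (ℝ × ℝ × ℝ) := {p | 0 < p.1 ∧ 0 < p.2.1}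

/-- The Longstaff–Schwartz (Kolmogorov backward) equation
`u_t = −((a−bx)·u_x + (d−ey)·u_y + (x/2)·u_xx + (y/2)·u_yy)` holds at the point `(x,y,t)`. -/
def LSEq (a b d e : ℝ) (u : ℝ → ℝ → ℝ → ℝ) (x y t : ℝ) : Prop :=
  pdT u x y t =
    -((a - b * x) * pdX u x y t + (d - e * y) * pdY u x y t +
      x / 2 * pdXX u x y t + y / 2 * pdYY u x y t)

/-- `u` is a solution of the Longstaff–Schwartz equation on `Ω`: it is C² on `Ω` and
satisfies the equation at every point of `Ω`. -/
def IsLSSolution (a b d e : ℝ) (u : ℝ → ℝ → ℝ → ℝ) : Prop :=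
  ContDiffOn ℝ 2 (fun p : ℝ × ℝ × ℝ => u p.1 p.2.1 p.2.2) Omega ∧
  ∀ x y t : ℝ, 0 < x → 0 < y → LSEq a b d e u x y t


/-!
Put `s = 2 √y`. Since `(1/4) ∂_y + (y/2) ∂²_y = (1/2) ∂²_s`, in the variables `(x, s, t)` the
equation with `d = 1/4`, `e = 0` is a backward heat equation in `s` (plus the `x`-terms, which
do not interact with `s`). The map `w` is the Galilean boost
`v(x, s, t) ↦ exp (ε s - ε² t / 2) · v(x, s - ε t, t)` of `v(x, s, t) = u(x, s²/4, t)`,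
which preserves solutions of the heat equation.
-/

open Filter Topology

lemma isOpen_omega : IsOpen Omega :=
  (isOpen_lt continuous_const continuous_fst).inter
    (isOpen_lt continuous_const (continuous_fst.comp continuous_snd))

section OneVariable

variable {f f' : ℝ → ℝ} {f'' : ℝ}

lemma hasDerivAt_comp_sq_div_four {σ : ℝ}
    (hf : ∀ᶠ Y in 𝓝 (σ ^ 2 / 4), HasDerivAt f (f' Y) Y) (hf' : HasDerivAt f' f'' (σ ^ 2 / 4)) :
    (∀ᶠ τ in 𝓝 σ, HasDerivAt (fun τ => f (τ ^ 2 / 4)) (τ / 2 * f' (τ ^ 2 / 4)) τ) ∧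
      HasDerivAt (fun τ => τ / 2 * f' (τ ^ 2 / 4)) (f' (σ ^ 2 / 4) / 2 + σ ^ 2 / 4 * f'') σ := by
  have hsq : ∀ τ : ℝ, HasDerivAt (fun τ : ℝ => τ ^ 2 / 4) (τ / 2) τ := fun τ =>
    ((hasDerivAt_pow 2 τ).div_const 4).congr_deriv (by push_cast; ring)
  refine ⟨?_, ?_⟩
  · filter_upwards [((continuous_pow 2).div_const 4).continuousAt.eventually hf] with τ hτ
    exact (hτ.comp τ (hsq τ)).congr_deriv (mul_comm _ _)
  · exact (((hasDerivAt_id' σ).div_const 2).mul (hf'.comp σ (hsq σ))).congr_deriv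
      (by simp only [Function.comp_apply]; ring)

lemma hasDerivAt_exp_mul_comp_sub {ε c s : ℝ}
    (hf : ∀ᶠ σ in 𝓝 (s - c), HasDerivAt f (f' σ) σ) (hf' : HasDerivAt f' f'' (s - c)) :
    (∀ᶠ r in 𝓝 s, HasDerivAt (fun r => Real.exp (ε * (2 * r - c) / 2) * f (r - c))
        (Real.exp (ε * (2 * r - c) / 2) * (ε * f (r - c) + f' (r - c))) r) ∧
      HasDerivAt (fun r => Real.exp (ε * (2 * r - c) / 2) * (ε * f (r - c) + f' (r - c)))
        (Real.exp (ε * (2 * s - c) / 2) * (ε ^ 2 * f (s - c) + 2 * ε * f' (s - c) + f'')) s := by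
  have hexp : ∀ r : ℝ, HasDerivAt (fun r => Real.exp (ε * (2 * r - c) / 2))
      (Real.exp (ε * (2 * r - c) / 2) * ε) r := fun r =>
    ((((((hasDerivAt_id' r).const_mul 2).sub_const c).const_mul ε).div_const 2).exp
      ).congr_deriv (by ring)
  have hshift : ∀ r : ℝ, HasDerivAt (fun r : ℝ => r - c) 1 r := fun r =>
    (hasDerivAt_id' r).sub_const c
  have hf_near : ∀ᶠ r in 𝓝 s, HasDerivAt f (f' (r - c)) (r - c) :=
    (continuous_sub_right c).continuousAt.eventually hf
  refine ⟨?_, ?_⟩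
  · filter_upwards [hf_near] with r hr
    exact ((hexp r).mul (hr.comp r (hshift r))).congr_deriv
      (by simp only [Function.comp_apply]; ring)
  · exact ((hexp s).mul (((hf_near.self_of_nhds.comp s (hshift s)).const_mul ε).add
      (hf'.comp s (hshift s)))).congr_deriv (by simp only [Pi.add_apply, Function.comp_apply]; ring)

lemma deriv_add_deriv_deriv_comp_two_mul_sqrt {y : ℝ} (hy : 0 < y)
    (hf : ∀ᶠ s in 𝓝 (2 * √y), HasDerivAt f (f' s) s) (hf' : HasDerivAt f' f'' (2 * √y)) :
    deriv (fun z => f (2 * √z)) y / 4 + y / 2 * deriv (deriv fun z => f (2 * √z)) y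
      = f'' / 2 := by
  have hsqrt : ∀ z, 0 < z → HasDerivAt (fun z => 2 * √z) (1 / √z) z := fun z hz =>
    ((Real.hasDerivAt_sqrt hz.ne').const_mul 2).congr_deriv (by field_simp)
  have hnear : ∀ᶠ z in 𝓝 y, 0 < z ∧ HasDerivAt f (f' (2 * √z)) (2 * √z) :=
    (eventually_gt_nhds hy).and
      ((continuous_const.mul Real.continuous_sqrt).continuousAt.eventually hf)
  have hderiv : deriv (fun z => f (2 * √z)) =ᶠ[𝓝 y] fun z => f' (2 * √z) / √z := by
    filter_upwards [hnear] with z ⟨hz, hfz⟩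
    exact (hfz.comp z (hsqrt z hz)).deriv.trans (mul_one_div _ _)
  have hr : 0 < √y := Real.sqrt_pos.mpr hy
  have h2 : HasDerivAt (fun z => f' (2 * √z) / √z)
      ((f'' * (1 / √y) * √y - f' (2 * √y) * (1 / (2 * √y))) / √y ^ 2) y :=
    (hf'.comp y (hsqrt y hy)).div (Real.hasDerivAt_sqrt hy.ne') hr.ne'
  rw [hderiv.self_of_nhds, hderiv.deriv_eq, h2.deriv]
  have hsq : √y ^ 2 = y := Real.sq_sqrt hy.le
  rw [hsq]
  field_simp
  rw [← hsq]
  ring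

end OneVariable

section Slices

variable {u : ℝ → ℝ → ℝ → ℝ} {x w t : ℝ}

lemma hasDerivAt_line_y : HasDerivAt (fun z : ℝ => ((x, z, t) : ℝ × ℝ × ℝ)) (0, 1, 0) w :=
  (hasDerivAt_const w x).prodMk ((hasDerivAt_id w).prodMk (hasDerivAt_const w t))

lemma hasDerivAt_line_t : HasDerivAt (fun z : ℝ => ((x, w, z) : ℝ × ℝ × ℝ)) (0, 0, 1) t :=
  (hasDerivAt_const t x).prodMk ((hasDerivAt_const t w).prodMk (hasDerivAt_id t))

lemma pdY_eq_fderiv (h : DifferentiableAt ℝ (fun p : ℝ × ℝ × ℝ => u p.1 p.2.1 p.2.2) (x, w, t)) :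
    pdY u x w t = fderiv ℝ (fun p : ℝ × ℝ × ℝ => u p.1 p.2.1 p.2.2) (x, w, t) (0, 1, 0) := by
  have hline := h.hasFDerivAt.comp_hasDerivAt w (hasDerivAt_line_y (x := x) (t := t))
  exact hline.deriv

lemma pdT_eq_fderiv (h : DifferentiableAt ℝ (fun p : ℝ × ℝ × ℝ => u p.1 p.2.1 p.2.2) (x, w, t)) :
    pdT u x w t = fderiv ℝ (fun p : ℝ × ℝ × ℝ => u p.1 p.2.1 p.2.2) (x, w, t) (0, 0, 1) := by
  have hline := h.hasFDerivAt.comp_hasDerivAt t (hasDerivAt_line_t (x := x) (w := w))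
  exact hline.deriv

lemma hasDerivAt_pdY (h : DifferentiableAt ℝ (fun p : ℝ × ℝ × ℝ => u p.1 p.2.1 p.2.2) (x, w, t)) :
    HasDerivAt (fun z => u x z t) (pdY u x w t) w := by
  have hline := h.hasFDerivAt.comp_hasDerivAt w (hasDerivAt_line_y (x := x) (t := t))
  rwa [← pdY_eq_fderiv h] at hline

lemma eventually_differentiableAt_slice
    (h : ContDiffAt ℝ 2 (fun p : ℝ × ℝ × ℝ => u p.1 p.2.1 p.2.2) (x, w, t)) :
    ∀ᶠ z in 𝓝 w, DifferentiableAt ℝ (fun p : ℝ × ℝ × ℝ => u p.1 p.2.1 p.2.2) (x, z, t) :=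
  hasDerivAt_line_y.continuousAt.eventually
    ((h.eventually (by simp)).mono fun _ hp => hp.differentiableAt (by norm_num))

lemma hasDerivAt_pdYY (h : ContDiffAt ℝ 2 (fun p : ℝ × ℝ × ℝ => u p.1 p.2.1 p.2.2) (x, w, t)) :
    HasDerivAt (fun z => pdY u x z t) (pdYY u x w t) w := by
  have hev : (fun z => pdY u x z t) =ᶠ[𝓝 w] fun z =>
      fderiv ℝ (fun p : ℝ × ℝ × ℝ => u p.1 p.2.1 p.2.2) (x, z, t) (0, 1, 0) :=
    (eventually_differentiableAt_slice h).mono fun _ hz => pdY_eq_fderiv hz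
  have hfderiv := (((h.fderiv_right (m := 1) (by norm_num)).clm_apply
    (contDiffAt_const (c := ((0 : ℝ), (1 : ℝ), (0 : ℝ))))).differentiableAt one_ne_zero).comp w
      (hasDerivAt_line_y (x := x) (t := t)).differentiableAt
  exact (hfderiv.congr_of_eventuallyEq hev).hasDerivAt

lemma hasDerivAt_comp_yt_curve {f : ℝ → ℝ} {f' : ℝ}
    (h : DifferentiableAt ℝ (fun p : ℝ × ℝ × ℝ => u p.1 p.2.1 p.2.2) (x, f t, t))
    (hf : HasDerivAt f f' t) :
    HasDerivAt (fun z => u x (f z) z) (pdY u x (f t) t * f' + pdT u x (f t) t) t := by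
  have hcurve : HasDerivAt (fun z : ℝ => ((x, f z, z) : ℝ × ℝ × ℝ)) (0, f', 1) t :=
    (hasDerivAt_const t x).prodMk (hf.prodMk (hasDerivAt_id t))
  have hsplit : ((0 : ℝ), f', (1 : ℝ)) = f' • ((0 : ℝ), (1 : ℝ), (0 : ℝ)) + (0, 0, 1) := by
    simp
  refine (h.hasFDerivAt.comp_hasDerivAt t hcurve).congr_deriv ?_
  rw [hsplit, map_add, map_smul, pdY_eq_fderiv h, pdT_eq_fderiv h, smul_eq_mul, mul_comm]

end Slices

noncomputable def lsBoost (ε : ℝ) (u : ℝ → ℝ → ℝ → ℝ) : ℝ → ℝ → ℝ → ℝ := fun x y t =>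
  Real.exp (ε * (4 * √y - t * ε) / 2) * u x ((2 * √y - t * ε) ^ 2 / 4) t

section Boost

variable {u : ℝ → ℝ → ℝ → ℝ} {ε x y t : ℝ}

lemma pdX_lsBoost : pdX (lsBoost ε u) x y t =
    Real.exp (ε * (4 * √y - t * ε) / 2) * pdX u x ((2 * √y - t * ε) ^ 2 / 4) t :=
  deriv_const_mul_field _

lemma pdXX_lsBoost : pdXX (lsBoost ε u) x y t =
    Real.exp (ε * (4 * √y - t * ε) / 2) * pdXX u x ((2 * √y - t * ε) ^ 2 / 4) t := by
  have hpdX : (fun z => pdX (lsBoost ε u) z y t) = fun z =>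
      Real.exp (ε * (4 * √y - t * ε) / 2) * pdX u z ((2 * √y - t * ε) ^ 2 / 4) t :=
    funext fun _ => pdX_lsBoost
  exact (congrArg (deriv · x) hpdX).trans (deriv_const_mul_field _)

lemma pdT_lsBoost (h : DifferentiableAt ℝ (fun p : ℝ × ℝ × ℝ => u p.1 p.2.1 p.2.2)
      (x, (2 * √y - t * ε) ^ 2 / 4, t)) :
    pdT (lsBoost ε u) x y t = Real.exp (ε * (4 * √y - t * ε) / 2) *
      (pdT u x ((2 * √y - t * ε) ^ 2 / 4) t - ε ^ 2 / 2 * u x ((2 * √y - t * ε) ^ 2 / 4) t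
        - ε * (2 * √y - t * ε) / 2 * pdY u x ((2 * √y - t * ε) ^ 2 / 4) t) := by
  have hexp : HasDerivAt (fun s => Real.exp (ε * (4 * √y - s * ε) / 2))
      (Real.exp (ε * (4 * √y - t * ε) / 2) * (-ε ^ 2 / 2)) t :=
    ((((hasDerivAt_id' t).mul_const ε).const_sub (4 * √y)).const_mul ε |>.div_const 2).exp
      |>.congr_deriv (by ring)
  have harg : HasDerivAt (fun s => (2 * √y - s * ε) ^ 2 / 4) (-(ε * (2 * √y - t * ε) / 2)) t :=
    ((((hasDerivAt_id' t).mul_const ε).const_sub (2 * √y)).pow 2 |>.div_const 4).congr_deriv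
      (by push_cast; ring)
  exact (hexp.mul (hasDerivAt_comp_yt_curve h harg)).deriv.trans (by ring)

lemma pdY_div_four_add_pdYY_lsBoost (hy : 0 < y)
    (h : ContDiffAt ℝ 2 (fun p : ℝ × ℝ × ℝ => u p.1 p.2.1 p.2.2)
      (x, (2 * √y - t * ε) ^ 2 / 4, t)) :
    pdY (lsBoost ε u) x y t / 4 + y / 2 * pdYY (lsBoost ε u) x y t =
      Real.exp (ε * (4 * √y - t * ε) / 2) *
        (ε ^ 2 / 2 * u x ((2 * √y - t * ε) ^ 2 / 4) t
          + ε * (2 * √y - t * ε) / 2 * pdY u x ((2 * √y - t * ε) ^ 2 / 4) t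
          + pdY u x ((2 * √y - t * ε) ^ 2 / 4) t / 4
          + (2 * √y - t * ε) ^ 2 / 4 / 2 * pdYY u x ((2 * √y - t * ε) ^ 2 / 4) t) := by
  obtain ⟨hsq, hsq'⟩ := hasDerivAt_comp_sq_div_four (f := fun Y => u x Y t)
    ((eventually_differentiableAt_slice h).mono fun _ => hasDerivAt_pdY) (hasDerivAt_pdYY h)
  obtain ⟨hboost, hboost'⟩ := hasDerivAt_exp_mul_comp_sub (ε := ε) hsq hsq'
  have hslice : (fun z => lsBoost ε u x z t) = fun z =>
      Real.exp (ε * (2 * (2 * √z) - t * ε) / 2) * u x ((2 * √z - t * ε) ^ 2 / 4) t := by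
    funext z
    simp only [lsBoost]
    ring_nf
  have hexp : Real.exp (ε * (2 * (2 * √y) - t * ε) / 2) = Real.exp (ε * (4 * √y - t * ε) / 2) := by
    ring_nf
  have hy_part := deriv_add_deriv_deriv_comp_two_mul_sqrt hy hboost hboost'
  rw [hexp] at hy_part
  simp only [pdYY, pdY, hslice] at hy_part ⊢
  rw [hy_part]
  ring

end Boost

/-- Symmetry of the Longstaff–Schwartz equation when `d = 1/4` and `e = 0`
(subcase 4.4, group `G₄`). -/
theorem ls_symmetry_d_quarter_e_zero (a b d e : ℝ) (hd : d = 1 / 4) (he : e = 0)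
    (u : ℝ → ℝ → ℝ → ℝ) (hu : IsLSSolution a b d e u) (ε : ℝ) :
    ∀ x y t : ℝ, 0 < x → 0 < y → 2 * Real.sqrt y > t * ε →
      LSEq a b d e
        (fun x y t =>
          Real.exp (ε * (4 * Real.sqrt y - t * ε) / 2) *
            u x ((2 * Real.sqrt y - t * ε) ^ 2 / 4) t)
        x y t := by
  obtain ⟨hU, hLS⟩ := hu
  subst hd he
  intro x y t hx hy hst
  have hY : 0 < (2 * √y - t * ε) ^ 2 / 4 := by have := sub_pos.mpr hst; positivity
  have hC : ContDiffAt ℝ 2 (fun p : ℝ × ℝ × ℝ => u p.1 p.2.1 p.2.2)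
      (x, (2 * √y - t * ε) ^ 2 / 4, t) :=
    hU.contDiffAt (isOpen_omega.mem_nhds ⟨hx, hY⟩)
  have hu := hLS x _ t hx hY
  change LSEq a b (1 / 4) 0 (lsBoost ε u) x y t
  unfold LSEq at hu ⊢
  rw [pdX_lsBoost, pdXX_lsBoost, pdT_lsBoost (hC.differentiableAt (by norm_num))]
  linear_combination Real.exp (ε * (4 * √y - t * ε) / 2) * hu + pdY_div_four_add_pdYY_lsBoost hy hC
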